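/- For all integers n, k, d with n ≥ k > d ≥ 1, every family of n axis-parallel boxes in ℝ^d with the property that no k+1 of the boxes have a point in common has at most Ψ(n, k, d) = t(n-k+d, d) + C(n,2) - C(n-k+d, 2) intersecting pairs. -/

import Mathlib

/-!
In each coordinate `i` pick a box `vᵢ` whose upper end `bᵢ` is smallest, and let `x = (bᵢ)ᵢ`.
A box missing `x` lies strictly beyond `vᵢ` in some coordinate `i`, so it is disjoint from `vᵢ`.
As at most `k` boxes contain `x`, among `n + 1 > k` boxes one of the `vᵢ` is disjoint from at
least `⌈(n + 1 - k) / d⌉ = ⌊m / d⌋` others, where `m = n - k + d`. Deleting it and inducting on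
`n` from the trivial case `n = k` proves the bound, since the last vertex of `𝒯(m + 1, d)` has
exactly `⌊m / d⌋` non-neighbours, i.e. `t(m + 1, d) = t(m, d) + m - ⌊m / d⌋`.
-/

/-- Number of edges of the Turán graph `𝒯(n, m)`, the complete `m`-partite graph on `n`
vertices whose vertex-class sizes are as equal as possible. -/
noncomputable def turanEdges (n m : ℕ) : ℕ :=
  (SimpleGraph.turanGraph n m).edgeFinset.card

/-- `S ⊆ ℝ^d` is an axis-parallel box: a product `∏ᵢ [aᵢ, bᵢ]` with `aᵢ ≤ bᵢ`. -/
def IsBox {d : ℕ} (S : Set (Fin d → ℝ)) : Prop :=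
  ∃ a b : Fin d → ℝ, (∀ i, a i ≤ b i) ∧
    S = Set.pi Set.univ (fun i => Set.Icc (a i) (b i))

/-- Number of intersecting pairs of an indexed family of sets: the number of unordered
pairs `{i, j}` with `i ≠ j` and `B i ∩ B j ≠ ∅`. -/
noncomputable def interPairs {n : ℕ} {α : Type*} (B : Fin n → Set α) : ℕ :=
  Set.ncard {p : Fin n × Fin n | p.1 < p.2 ∧ (B p.1 ∩ B p.2).Nonempty}

open Finset SimpleGraph

namespace SimpleGraph

variable {V : Type*}

lemma card_edgeFinset_eq_ncard_lt [LinearOrder V] (G : SimpleGraph V) [Fintype G.edgeSet] :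
    #G.edgeFinset = {p : V × V | p.1 < p.2 ∧ G.Adj p.1 p.2}.ncard := by
  set S := {p : V × V | p.1 < p.2 ∧ G.Adj p.1 p.2}
  have hinj : Set.InjOn (fun p : V × V => s(p.1, p.2)) S := by
    rintro ⟨a, b⟩ ⟨hab, -⟩ ⟨c, d⟩ ⟨hcd, -⟩ h
    rcases Sym2.eq_iff.mp h with ⟨rfl, rfl⟩ | ⟨rfl, rfl⟩
    · rfl
    · exact absurd (hab.trans hcd) (lt_irrefl _)
  have himg : (fun p : V × V => s(p.1, p.2)) '' S = G.edgeSet := by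
    ext e
    induction e using Sym2.ind with
    | _ a b =>
      refine ⟨?_, fun h => ?_⟩
      · rintro ⟨p, ⟨-, hp⟩, he⟩
        exact he ▸ hp
      · rcases (G.ne_of_adj h).lt_or_gt with hab | hab
        · exact ⟨(a, b), ⟨hab, h⟩, rfl⟩
        · exact ⟨(b, a), ⟨hab, h.symm⟩, Sym2.eq_swap⟩
  rw [← Set.ncard_coe_finset, coe_edgeFinset, ← himg, hinj.ncard_image]

lemma card_edgeFinset_eq_degree_add_induce [Fintype V] [DecidableEq V] (G : SimpleGraph V)
    [DecidableRel G.Adj] (v : V) : #G.edgeFinset = G.degree v + #(G.induce {v}ᶜ).edgeFinset := by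
  rw [card_edgeFinset_induce_compl_singleton, card_edgeFinset_deleteIncidenceSet]
  have := G.degree_le_card_edgeFinset v
  omega

end SimpleGraph

lemma Set.ncard_setOf_subtype_le {ι : Type*} [Finite ι] (P : ι → Prop) (s : Set ι) :
    {i : s | P i}.ncard ≤ {j | P j}.ncard :=
  Set.ncard_le_ncard_of_injOn Subtype.val (fun _ h => h) Subtype.val_injective.injOn

lemma Fin.card_filter_val_eq_count (p : ℕ → Prop) [DecidablePred p] (m : ℕ) :
    #{w : Fin m | p w} = m.count p := by
  rw [Nat.count_eq_card_filter_range, ← Nat.Iio_eq_range, ← Fin.map_valEmbedding_univ, filter_map,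
    card_map]
  rfl

namespace SimpleGraph

def turanGraphSuccIso (m d : ℕ) :
    turanGraph m d ≃g (turanGraph (m + 1) d).induce {Fin.last m}ᶜ where
  toEquiv := finSuccAboveEquiv (Fin.last m)
  map_rel_iff' {a b} := by
    change (Fin.last m).succAbove a % d ≠ (Fin.last m).succAbove b % d ↔ _
    simp [turanGraph_adj, Fin.succAbove_last]

lemma degree_turanGraph_last (m : ℕ) {d : ℕ} (hd : 0 < d) :
    (turanGraph (m + 1) d).degree (Fin.last m) = m - m / d := by
  have hcount : #{w : Fin m | (w : ℕ) ≡ m [MOD d]} = m / d := by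
    rw [Fin.card_filter_val_eq_count (· ≡ m [MOD d]), Nat.count_modEq_card _ hd,
      if_neg (lt_irrefl _), add_zero]
  have hsplit := card_filter_add_card_filter_not (s := (univ : Finset (Fin m)))
    (fun w : Fin m => (w : ℕ) ≡ m [MOD d])
  rw [card_univ, Fintype.card_fin, hcount] at hsplit
  rw [← card_neighborFinset_eq_degree, neighborFinset_eq_filter, Fin.univ_castSuccEmb, filter_cons,
    if_neg ((turanGraph (m + 1) d).loopless.irrefl _), filter_map, card_map]
  calc _ = #{w : Fin m | ¬ (w : ℕ) ≡ m [MOD d]} := by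
        congr 1
        ext w
        simp [turanGraph_adj, Nat.ModEq, eq_comm]
    _ = m - m / d := by omega

lemma card_edgeFinset_turanGraph_succ (m : ℕ) {d : ℕ} (hd : 0 < d) :
    #(turanGraph (m + 1) d).edgeFinset = #(turanGraph m d).edgeFinset + (m - m / d) := by
  rw [card_edgeFinset_eq_degree_add_induce _ (Fin.last m), degree_turanGraph_last m hd,
    (turanGraphSuccIso m d).card_edgeFinset_eq, add_comm]

lemma card_edgeFinset_turanGraph_self (d : ℕ) : #(turanGraph d d).edgeFinset = d.choose 2 := by
  have := card_edgeFinset_top_eq_card_choose_two (V := Fin d)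
  rw [Fintype.card_fin] at this
  convert! this
  exact turanGraph_eq_top.mpr (.inr le_rfl)

end SimpleGraph

section IntersectionGraph

variable {ι α : Type*}

def intersectionGraph (B : ι → Set α) : SimpleGraph ι where
  Adj i j := i ≠ j ∧ (B i ∩ B j).Nonempty
  symm := ⟨fun i j h => ⟨h.1.symm, Set.inter_comm (B i) (B j) ▸ h.2⟩⟩
  loopless := ⟨fun _ h => h.1 rfl⟩

noncomputable instance (B : ι → Set α) : DecidableRel (intersectionGraph B).Adj :=
  Classical.decRel _

lemma intersectionGraph_adj {B : ι → Set α} {i j : ι} :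
    (intersectionGraph B).Adj i j ↔ i ≠ j ∧ (B i ∩ B j).Nonempty := Iff.rfl

lemma intersectionGraph_induce (B : ι → Set α) (s : Set ι) :
    (intersectionGraph B).induce s = intersectionGraph fun i : s => B i := by
  ext i j
  simp [intersectionGraph_adj, Subtype.ext_iff]

open scoped Classical in
lemma degree_intersectionGraph_add_card_disjoint [Fintype ι] (B : ι → Set α) {v : ι}
    (hv : (B v).Nonempty) :
    (intersectionGraph B).degree v + #{j | Disjoint (B v) (B j)} + 1 = Fintype.card ι := by
  have hsplit := card_filter_add_card_filter_not (s := univ) fun j => (B v ∩ B j).Nonempty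
  have hnbr : ({j | (B v ∩ B j).Nonempty} : Finset ι)
      = insert v ((intersectionGraph B).neighborFinset v) := by
    ext j
    by_cases hj : j = v
    · subst hj
      simpa using hv
    · simp [hj, intersectionGraph_adj, Ne.symm hj]
  simp only [Set.not_nonempty_iff_eq_empty, ← Set.disjoint_iff_inter_eq_empty, hnbr,
    card_univ] at hsplit
  rw [card_insert_of_notMem (notMem_neighborFinset_self _ _), card_neighborFinset_eq_degree]
    at hsplit
  omega

lemma interPairs_eq_card_edgeFinset {n : ℕ} (B : Fin n → Set α) :
    interPairs B = #(intersectionGraph B).edgeFinset := by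
  rw [card_edgeFinset_eq_ncard_lt, interPairs]
  congr 1
  ext p
  simp only [Set.mem_ofPred_eq, intersectionGraph_adj]
  exact and_congr_right fun h => (and_iff_right h.ne).symm

end IntersectionGraph

section Boxes

variable {ι : Type*} {d : ℕ}

lemma IsBox.nonempty {S : Set (Fin d → ℝ)} (h : IsBox S) : S.Nonempty := by
  obtain ⟨a, b, hab, rfl⟩ := h
  exact ⟨a, fun i _ => ⟨le_rfl, hab i⟩⟩

lemma exists_point_disjoint_of_notMem [Finite ι] [Nonempty ι]
    (B : ι → Set (Fin d → ℝ)) (hbox : ∀ j, IsBox (B j)) :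
    ∃ (x : Fin d → ℝ) (v : Fin d → ι), ∀ j, x ∉ B j → ∃ i, Disjoint (B (v i)) (B j) := by
  choose a b _ hB using hbox
  choose v hv using fun i : Fin d => Finite.exists_min fun j => b j i
  refine ⟨fun i => b (v i) i, v, fun j hj => ?_⟩
  simp only [hB, Set.mem_pi, Set.mem_univ, Set.mem_Icc, forall_const, not_forall] at hj
  obtain ⟨i, hi⟩ := hj
  have hlt : b (v i) i < a j i := lt_of_not_ge fun h => hi ⟨h, hv i j⟩
  refine ⟨i, Set.disjoint_left.mpr fun y hyv hyj => ?_⟩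
  rw [hB] at hyv hyj
  exact (hlt.trans_le (hyj i trivial).1).not_ge (hyv i trivial).2

open scoped Classical in
lemma exists_card_sub_le_mul_card_disjoint [Fintype ι] [Nonempty ι] {k : ℕ}
    (B : ι → Set (Fin d → ℝ)) (hbox : ∀ j, IsBox (B j))
    (hcap : ∀ x, {j | x ∈ B j}.ncard ≤ k) :
    ∃ v, Fintype.card ι - k ≤ d * #{j | Disjoint (B v) (B j)} := by
  obtain ⟨x, v, hv⟩ := exists_point_disjoint_of_notMem B hbox
  obtain ⟨w, hw⟩ := Finite.exists_max fun u => #{j | Disjoint (B u) (B j)}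
  refine ⟨w, ?_⟩
  have hx : #{j | x ∈ B j} ≤ k := by
    simpa only [← Set.ncard_coe_finset, coe_filter, mem_univ, true_and] using hcap x
  calc Fintype.card ι - k ≤ #{j | x ∉ B j} := by
        have := card_filter_add_card_filter_not (s := univ) (fun j => x ∈ B j)
        rw [card_univ] at this
        omega
    _ ≤ #(univ.biUnion fun i => {j | Disjoint (B (v i)) (B j)}) := by
        refine card_le_card fun j hj => ?_
        obtain ⟨i, hi⟩ := hv j (mem_filter.mp hj).2
        exact mem_biUnion.mpr ⟨i, mem_univ i, mem_filter.mpr ⟨mem_univ j, hi⟩⟩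
    _ ≤ ∑ i, #{j | Disjoint (B (v i)) (B j)} := card_biUnion_le
    _ ≤ ∑ _i : Fin d, #{j | Disjoint (B w) (B j)} := sum_le_sum fun i _ => hw (v i)
    _ = d * #{j | Disjoint (B w) (B j)} := by simp

theorem card_edgeFinset_intersectionGraph_add_choose_le {k : ℕ} (hdk : d ≤ k) (N : ℕ) :
    ∀ {ι : Type*} [Fintype ι] (B : ι → Set (Fin d → ℝ)), Fintype.card ι = N + k →
      (∀ j, IsBox (B j)) → (∀ x, {j | x ∈ B j}.ncard ≤ k) →
      #(intersectionGraph B).edgeFinset + (N + d).choose 2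
        ≤ #(turanGraph (N + d) d).edgeFinset + (N + k).choose 2 := by
  classical
  induction N with
  | zero =>
    intro ι _ B hcard _ _
    have := card_edgeFinset_le_card_choose_two (G := intersectionGraph B)
    rw [hcard, zero_add] at this
    rw [zero_add, zero_add, card_edgeFinset_turanGraph_self]
    omega
  | succ N ih =>
    intro ι _ B hcard hbox hcap
    have : Nonempty ι := Fintype.card_pos_iff.mp (by omega)
    obtain ⟨v, hv⟩ := exists_card_sub_le_mul_card_disjoint B hbox hcap
    have hdeg := degree_intersectionGraph_add_card_disjoint B (hbox v).nonempty
    have hd : 0 < d := Nat.pos_of_ne_zero (by rintro rfl; omega)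
    have hc : N / d < #{j | Disjoint (B v) (B j)} :=
      (Nat.div_lt_iff_lt_mul hd).mpr (by rw [Nat.mul_comm]; omega)
    have hrest := ih (fun i : ({v}ᶜ : Set ι) => B i)
      (by rw [Fintype.card_compl_set, Set.card_singleton]; omega) (fun j => hbox j)
      (fun x => (Set.ncard_setOf_subtype_le (x ∈ B ·) _).trans (hcap x))
    have hsplit := card_edgeFinset_eq_degree_add_induce (intersectionGraph B) v
    have hinduce : #((intersectionGraph B).induce {v}ᶜ).edgeFinset
        = #(intersectionGraph fun i : ({v}ᶜ : Set ι) => B i).edgeFinset :=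
      Iso.card_edgeFinset_eq (intersectionGraph_induce B {v}ᶜ ▸ Iso.refl)
    have hturan := card_edgeFinset_turanGraph_succ (N + d) hd
    rw [Nat.add_div_right N hd] at hturan
    have hchoose (m : ℕ) : (m + 1).choose 2 = m.choose 2 + m := by
      simp [Nat.choose_succ_succ', add_comm]
    rw [show N + 1 + d = N + d + 1 by ring, show N + 1 + k = N + k + 1 by ring, hchoose, hchoose]
    omega

end Boxes

theorem boxes_upper_bound_general (n k d : ℕ) (hkn : k ≤ n) (hdk : d < k)
    (B : Fin n → Set (Fin d → ℝ)) (hbox : ∀ i, IsBox (B i))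
    (hcap : ∀ x : Fin d → ℝ, Set.ncard {i | x ∈ B i} ≤ k) :
    interPairs B ≤
      turanEdges (n - k + d) d + (Nat.choose n 2 - Nat.choose (n - k + d) 2) := by
  obtain ⟨N, rfl⟩ := Nat.exists_eq_add_of_le' hkn
  have h := card_edgeFinset_intersectionGraph_add_choose_le hdk.le N B (Fintype.card_fin _)
    hbox hcap
  have hchoose : (N + d).choose 2 ≤ (N + k).choose 2 := Nat.choose_le_choose 2 (by omega)
  rw [interPairs_eq_card_edgeFinset, turanEdges, Nat.add_sub_cancel]
  omega

/-- For `n ≥ k > d ≥ 1`, every family of `n` axis-parallel boxes in `ℝ^d` with no `k+1`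
boxes having a common point has at most `Ψ(n,k,d) = t(n-k+d, d) + (C(n,2) - C(n-k+d, 2))`
intersecting pairs. -/
theorem boxes_upper_bound (n k d : ℕ) (hkn : k ≤ n) (hdk : d < k) (hd : 1 ≤ d)
    (B : Fin n → Set (Fin d → ℝ)) (hbox : ∀ i, IsBox (B i))
    (hcap : ∀ x : Fin d → ℝ, Set.ncard {i | x ∈ B i} ≤ k) :
    interPairs B ≤
      turanEdges (n - k + d) d + (Nat.choose n 2 - Nat.choose (n - k + d) 2) :=
  boxes_upper_bound_general n k d hkn hdk B hbox hcap
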